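/- Let G be a finite simple graph, d ≥ 1 an integer, u a vertex of G, and let H be obtained from G by attaching a pendant clique C of r ≥ 2d+1 vertices to u. Then a set of edges F ⊆ E(G) is the edge cut of a d-cut of G if and only if F is the edge cut of a d-cut of H; moreover the same equivalence holds with 'd-cut' replaced by 'minimal d-cut' and by 'maximal d-cut'. -/

import Mathlib

variable {V : Type*}

/-- A `d`-cut of a simple graph `G`: a partition `(A, B)` of the vertex set into two
nonempty parts such that every vertex of `A` has at most `d` neighbors in `B` and
every vertex of `B` has at most `d` neighbors in `A`. -/
def IsDCut (G : SimpleGraph V) (d : ℕ) (A B : Set V) : Prop :=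
  A.Nonempty ∧ B.Nonempty ∧ Disjoint A B ∧ A ∪ B = Set.univ ∧
    (∀ v ∈ A, (G.neighborSet v ∩ B).ncard ≤ d) ∧
    (∀ v ∈ B, (G.neighborSet v ∩ A).ncard ≤ d)

/-- A vertex set `T` is monochromatic if every `d`-cut of `G` has `T` entirely on one side. -/
def Monochromatic (G : SimpleGraph V) (d : ℕ) (T : Set V) : Prop :=
  ∀ A B : Set V, IsDCut G d A B → T ⊆ A ∨ T ⊆ B

/-- The edge cut of a cut `(A, B)`: the set of edges of `G` with one endpoint in `A`
and the other endpoint in `B`. -/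
def edgeCut (G : SimpleGraph V) (A B : Set V) : Set (Sym2 V) :=
  {e | e ∈ G.edgeSet ∧ ∃ u v, e = s(u, v) ∧ u ∈ A ∧ v ∈ B}

/-- A minimal `d`-cut: no `d`-cut has an edge cut that is a proper subset of its edge cut. -/
def IsMinimalDCut (G : SimpleGraph V) (d : ℕ) (A B : Set V) : Prop :=
  IsDCut G d A B ∧ ∀ A' B' : Set V, IsDCut G d A' B' → ¬ edgeCut G A' B' ⊂ edgeCut G A B

/-- A maximal `d`-cut: no `d`-cut has an edge cut that properly contains its edge cut. -/
def IsMaximalDCut (G : SimpleGraph V) (d : ℕ) (A B : Set V) : Prop :=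
  IsDCut G d A B ∧ ∀ A' B' : Set V, IsDCut G d A' B' → ¬ edgeCut G A B ⊂ edgeCut G A' B'

/-- The graph obtained from `G` by attaching a pendant clique of `r` new vertices to `u`:
the `r` new vertices are pairwise adjacent, each of them is adjacent to `u`, and no
other edges are added. -/
def attachPendantClique (G : SimpleGraph V) (u : V) (r : ℕ) :
    SimpleGraph (V ⊕ Fin r) :=
  SimpleGraph.fromRel (fun a b =>
    (∃ x y : V, a = Sum.inl x ∧ b = Sum.inl y ∧ G.Adj x y) ∨
    (∃ c : Fin r, a = Sum.inl u ∧ b = Sum.inr c) ∨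
    (∃ c c' : Fin r, a = Sum.inr c ∧ b = Sum.inr c'))


/-! A `d`-cut of `H` cannot split the clique `C`: a clique vertex on one side sees every clique
vertex on the other side, so each side holds at most `d` of the `r ≥ 2d + 1` clique vertices.
Then `u` lies on the side of `C`, as it has `r > d` neighbours there. So the `d`-cuts of `H` are
exactly the cuts `((inl '' B)ᶜ, inl '' B)` with `u ∉ B` for which `(Bᶜ, B)` is a `d`-cut of
`G`, with the same edge cut. The edge cuts of `d`-cuts of `H` are therefore the image of those
of `G` under the order embedding `F ↦ inl '' F`, which matches minimal and maximal elements. -/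

open Set Function

theorem Set.minimal_mem_image_image_iff {α β : Type*} {f : α → β} (hf : Injective f)
    {S : Set (Set α)} {s : Set α} :
    Minimal (· ∈ image f '' S) (f '' s) ↔ Minimal (· ∈ S) s := by
  by_cases hs : s ∈ S
  · exact minimal_mem_image_monotone_iff hs fun _ _ _ _ => image_subset_image_iff hf
  · exact iff_of_false (fun h => hs ((image_injective.2 hf).mem_set_image.1 h.prop))
      fun h => hs h.prop

theorem Set.maximal_mem_image_image_iff {α β : Type*} {f : α → β} (hf : Injective f)
    {S : Set (Set α)} {s : Set α} :
    Maximal (· ∈ image f '' S) (f '' s) ↔ Maximal (· ∈ S) s := by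
  by_cases hs : s ∈ S
  · exact maximal_mem_image_monotone_iff hs fun _ _ _ _ => image_subset_image_iff hf
  · exact iff_of_false (fun h => hs ((image_injective.2 hf).mem_set_image.1 h.prop))
      fun h => hs h.prop

section DCut

variable {G : SimpleGraph V} {d : ℕ} {A B : Set V}

theorem IsDCut.symm (h : IsDCut G d A B) : IsDCut G d B A :=
  ⟨h.2.1, h.1, h.2.2.1.symm, union_comm A B ▸ h.2.2.2.1, h.2.2.2.2.2, h.2.2.2.2.1⟩

theorem IsDCut.eq_compl (h : IsDCut G d A B) : A = Bᶜ :=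
  eq_compl_iff_isCompl.2 ⟨h.2.2.1, codisjoint_iff.2 h.2.2.2.1⟩

theorem IsDCut.notMem_left_iff (h : IsDCut G d A B) {x : V} : x ∉ A ↔ x ∈ B := by
  rw [h.eq_compl, mem_compl_iff, not_not]

theorem edgeCut_comm (G : SimpleGraph V) (A B : Set V) : edgeCut G A B = edgeCut G B A := by
  ext e
  constructor <;> rintro ⟨he, a, b, rfl, ha, hb⟩ <;>
    exact ⟨by rwa [Sym2.eq_swap] at he ⊢, b, a, Sym2.eq_swap, hb, ha⟩

theorem IsDCut.exists_subset_left {T : Set V} (h : IsDCut G d A B) (hT : T ⊆ A ∨ T ⊆ B) :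
    ∃ A' B', IsDCut G d A' B' ∧ edgeCut G A' B' = edgeCut G A B ∧ T ⊆ A' := by
  rcases hT with hT | hT
  · exact ⟨A, B, h, rfl, hT⟩
  · exact ⟨B, A, h.symm, edgeCut_comm G B A, hT⟩

def dCutEdgeCuts (G : SimpleGraph V) (d : ℕ) : Set (Set (Sym2 V)) :=
  {F | ∃ A B, IsDCut G d A B ∧ edgeCut G A B = F}

theorem exists_isMinimalDCut_iff_minimal {F : Set (Sym2 V)} :
    (∃ A B, IsMinimalDCut G d A B ∧ edgeCut G A B = F) ↔
      Minimal (· ∈ dCutEdgeCuts G d) F := by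
  rw [Set.minimal_iff_forall_ssubset]
  constructor
  · rintro ⟨A, B, ⟨h, hmin⟩, rfl⟩
    exact ⟨⟨A, B, h, rfl⟩, fun _ hF ⟨A', B', h', hF'⟩ => hmin A' B' h' (hF' ▸ hF)⟩
  · rintro ⟨⟨A, B, h, rfl⟩, hmin⟩
    exact ⟨A, B, ⟨h, fun A' B' h' hF => hmin hF ⟨A', B', h', rfl⟩⟩, rfl⟩

theorem exists_isMaximalDCut_iff_maximal {F : Set (Sym2 V)} :
    (∃ A B, IsMaximalDCut G d A B ∧ edgeCut G A B = F) ↔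
      Maximal (· ∈ dCutEdgeCuts G d) F := by
  rw [Set.maximal_iff_forall_ssuperset]
  constructor
  · rintro ⟨A, B, ⟨h, hmax⟩, rfl⟩
    exact ⟨⟨A, B, h, rfl⟩, fun _ hF ⟨A', B', h', hF'⟩ => hmax A' B' h' (hF' ▸ hF)⟩
  · rintro ⟨⟨A, B, h, rfl⟩, hmax⟩
    exact ⟨A, B, ⟨h, fun A' B' h' hF => hmax hF ⟨A', B', h', rfl⟩⟩, rfl⟩

end DCut

section PendantClique

variable {G : SimpleGraph V} {u : V} {r d : ℕ}

@[simp]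
theorem attachPendantClique_adj_inl_inl {x y : V} :
    (attachPendantClique G u r).Adj (.inl x) (.inl y) ↔ G.Adj x y := by
  simpa [attachPendantClique, G.adj_comm y x] using fun h : G.Adj x y => h.ne

@[simp]
theorem attachPendantClique_adj_inl_inr {x : V} {c : Fin r} :
    (attachPendantClique G u r).Adj (.inl x) (.inr c) ↔ x = u := by
  simp [attachPendantClique]

@[simp]
theorem attachPendantClique_adj_inr_inl {x : V} {c : Fin r} :
    (attachPendantClique G u r).Adj (.inr c) (.inl x) ↔ x = u := by
  simp [attachPendantClique, eq_comm]

@[simp]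
theorem attachPendantClique_adj_inr_inr {c c' : Fin r} :
    (attachPendantClique G u r).Adj (.inr c) (.inr c') ↔ c ≠ c' := by
  simp [attachPendantClique]

theorem attachPendantClique_neighborSet_inl_inter {x : V} {S : Set (V ⊕ Fin r)}
    (h : x ≠ u ∨ Disjoint (range Sum.inr) S) :
    (attachPendantClique G u r).neighborSet (.inl x) ∩ S =
      Sum.inl '' (G.neighborSet x ∩ Sum.inl ⁻¹' S) := by
  ext (y | c)
  · simp
  · simp only [mem_inter_iff, SimpleGraph.mem_neighborSet, attachPendantClique_adj_inl_inr,
      mem_image, reduceCtorEq, and_false, exists_false, iff_false, not_and]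
    rintro rfl hc
    exact h.elim (· rfl) fun h => disjoint_left.1 h (mem_range_self c) hc

theorem attachPendantClique_ncard_neighborSet_inl_inter {x : V} {S : Set (V ⊕ Fin r)}
    (h : x ≠ u ∨ Disjoint (range Sum.inr) S) :
    ((attachPendantClique G u r).neighborSet (.inl x) ∩ S).ncard =
      (G.neighborSet x ∩ Sum.inl ⁻¹' S).ncard := by
  rw [attachPendantClique_neighborSet_inl_inter h, ncard_image_of_injective _ Sum.inl_injective]

theorem attachPendantClique_neighborSet_inr_subset (c : Fin r) :
    (attachPendantClique G u r).neighborSet (.inr c) ⊆ insert (.inl u) (range Sum.inr) := by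
  rintro (y | c') h
  · simp_all
  · simp

theorem IsDCut.attachPendantClique_ncard_preimage_inr_le {A B : Set (V ⊕ Fin r)}
    (h : IsDCut (attachPendantClique G u r) d A B) {c : Fin r} (hc : .inr c ∈ A) :
    (Sum.inr ⁻¹' B).ncard ≤ d := by
  have hsub : Sum.inr '' (Sum.inr ⁻¹' B) ⊆
      (attachPendantClique G u r).neighborSet (.inr c) ∩ B := by
    rintro _ ⟨c', hc', rfl⟩
    refine ⟨?_, hc'⟩
    rw [SimpleGraph.mem_neighborSet, attachPendantClique_adj_inr_inr]
    rintro rfl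
    exact disjoint_left.1 h.2.2.1 hc hc'
  have hfin : ((attachPendantClique G u r).neighborSet (.inr c) ∩ B).Finite :=
    (((finite_range _).insert _).subset
      (attachPendantClique_neighborSet_inr_subset c)).inter_of_left B
  calc (Sum.inr ⁻¹' B).ncard = (Sum.inr '' (Sum.inr ⁻¹' B)).ncard :=
        (ncard_image_of_injective _ Sum.inr_injective).symm
    _ ≤ _ := ncard_le_ncard hsub hfin
    _ ≤ d := h.2.2.2.2.1 _ hc

theorem IsDCut.attachPendantClique_range_inr_subset_or (hr : 2 * d + 1 ≤ r)
    {A B : Set (V ⊕ Fin r)} (h : IsDCut (attachPendantClique G u r) d A B) :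
    range Sum.inr ⊆ A ∨ range Sum.inr ⊆ B := by
  by_contra! hsplit
  obtain ⟨_, ⟨c, rfl⟩, hcA⟩ := not_subset.1 hsplit.1
  obtain ⟨_, ⟨c', rfl⟩, hc'B⟩ := not_subset.1 hsplit.2
  have hcover : Sum.inr ⁻¹' A ∪ Sum.inr ⁻¹' B = univ := by
    rw [← preimage_union, h.2.2.2.1, preimage_univ]
  have : r ≤ d + d := calc
    r = (univ : Set (Fin r)).ncard := by simp
    _ ≤ (Sum.inr ⁻¹' A).ncard + (Sum.inr ⁻¹' B).ncard := hcover ▸ ncard_union_le _ _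
    _ ≤ d + d := add_le_add
      (h.symm.attachPendantClique_ncard_preimage_inr_le (h.notMem_left_iff.1 hcA))
      (h.attachPendantClique_ncard_preimage_inr_le (h.symm.notMem_left_iff.1 hc'B))
  omega

-- Finiteness matters here: the `ncard` of an infinite neighbourhood is `0`.
theorem IsDCut.attachPendantClique_inl_mem_of_range_inr_subset [Finite V] (hr : d < r)
    {A B : Set (V ⊕ Fin r)} (h : IsDCut (attachPendantClique G u r) d A B)
    (hC : range Sum.inr ⊆ A) : .inl u ∈ A := by
  by_contra hu
  have hsub : range Sum.inr ⊆ (attachPendantClique G u r).neighborSet (.inl u) ∩ A :=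
    fun _ ⟨c, hc⟩ => hc ▸ ⟨by simp, hC ⟨c, rfl⟩⟩
  have : r ≤ d := calc
    r = (range (Sum.inr : Fin r → V ⊕ Fin r)).ncard := by
      simp [ncard_range_of_injective Sum.inr_injective]
    _ ≤ _ := ncard_le_ncard hsub
    _ ≤ d := h.2.2.2.2.2 _ (h.notMem_left_iff.1 hu)
  omega

theorem monochromatic_attachPendantClique [Finite V] (hr : 2 * d + 1 ≤ r) :
    Monochromatic (attachPendantClique G u r) d (insert (.inl u) (range Sum.inr)) := by
  intro A B h
  have hdr : d < r := by omega
  rcases h.attachPendantClique_range_inr_subset_or hr with hC | hC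
  · exact .inl (insert_subset (h.attachPendantClique_inl_mem_of_range_inr_subset hdr hC) hC)
  · exact .inr (insert_subset (h.symm.attachPendantClique_inl_mem_of_range_inr_subset hdr hC) hC)

theorem attachPendantClique_neighborSet_inr_inter_image {c : Fin r} {B : Set V} (hu : u ∉ B) :
    (attachPendantClique G u r).neighborSet (.inr c) ∩ Sum.inl '' B = ∅ := by
  ext (y | c') <;> simp only [mem_inter_iff, SimpleGraph.mem_neighborSet, mem_image,
    Sum.inl.injEq, exists_eq_right, reduceCtorEq, and_false, exists_false, mem_empty_iff_false,
    iff_false, not_and, attachPendantClique_adj_inr_inl]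
  rintro rfl
  exact hu

theorem isDCut_attachPendantClique_iff {B : Set V} (hu : u ∉ B) :
    IsDCut (attachPendantClique G u r) d (Sum.inl '' B)ᶜ (Sum.inl '' B) ↔
      IsDCut G d Bᶜ B := by
  have hB : Disjoint (range Sum.inr) (Sum.inl '' B : Set (V ⊕ Fin r)) := by
    simp [disjoint_left]
  simp only [IsDCut, Sum.forall, forall_mem_image, mem_compl_iff, image_nonempty,
    Sum.inl_injective.mem_set_image, attachPendantClique_ncard_neighborSet_inl_inter (.inr hB),
    preimage_image_eq _ Sum.inl_injective, attachPendantClique_neighborSet_inr_inter_image hu,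
    ncard_empty, zero_le, imp_true_iff, and_true, disjoint_compl_left,
    compl_union_self, true_and]
  refine and_congr (iff_of_true ⟨.inl u, by simpa⟩ ⟨u, hu⟩)
    (and_congr_right' (and_congr_right' (forall₂_congr fun x hx => ?_)))
  rw [attachPendantClique_ncard_neighborSet_inl_inter (.inl (ne_of_mem_of_not_mem hx hu)),
    preimage_compl, preimage_image_eq _ Sum.inl_injective]

theorem edgeCut_attachPendantClique {B : Set V} (hu : u ∉ B) :
    edgeCut (attachPendantClique G u r) (Sum.inl '' B)ᶜ (Sum.inl '' B) =
      Sym2.map Sum.inl '' edgeCut G Bᶜ B := by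
  ext e
  constructor
  · rintro ⟨he, a, _, rfl, ha, ⟨y, hy, rfl⟩⟩
    cases a with
    | inl x => exact ⟨s(x, y), ⟨by simpa using he, x, y, rfl, by simpa using ha, hy⟩, rfl⟩
    | inr c => exact absurd ((attachPendantClique_adj_inr_inl.1 he) ▸ hy) hu
  · rintro ⟨_, ⟨he, x, y, rfl, hx, hy⟩, rfl⟩
    exact ⟨by simpa using he, .inl x, .inl y, rfl, by simpa using hx, mem_image_of_mem _ hy⟩

theorem dCutEdgeCuts_attachPendantClique [Finite V] (hr : 2 * d + 1 ≤ r) :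
    dCutEdgeCuts (attachPendantClique G u r) d = image (Sym2.map Sum.inl) '' dCutEdgeCuts G d := by
  ext F
  constructor
  · rintro ⟨A, B, h, rfl⟩
    obtain ⟨A, B, h, hcut, hT⟩ :=
      h.exists_subset_left (monochromatic_attachPendantClique hr A B h)
    obtain rfl := h.eq_compl
    obtain ⟨B, rfl⟩ : ∃ B₀, B = Sum.inl '' B₀ := by
      refine ⟨_, (image_preimage_eq_of_subset fun b hb => ?_).symm⟩
      cases b with
      | inl x => exact mem_range_self x
      | inr c => exact absurd hb (hT (mem_insert_of_mem _ (mem_range_self c)))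
    have hu : u ∉ B := fun hu => hT (mem_insert _ _) (mem_image_of_mem _ hu)
    exact ⟨_, ⟨_, _, (isDCut_attachPendantClique_iff hu).1 h, rfl⟩,
      (edgeCut_attachPendantClique hu).symm.trans hcut⟩
  · rintro ⟨_, ⟨A, B, h, rfl⟩, rfl⟩
    obtain ⟨A, B, h, hcut, hu⟩ := h.exists_subset_left (T := {u})
      ((em (u ∈ A)).imp singleton_subset_iff.2 (singleton_subset_iff.2 ∘ h.notMem_left_iff.1))
    obtain rfl := h.eq_compl
    have hu : u ∉ B := singleton_subset_iff.1 hu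
    exact ⟨_, _, (isDCut_attachPendantClique_iff hu).2 h,
      (edgeCut_attachPendantClique hu).trans (congrArg _ hcut)⟩

end PendantClique

theorem pendantClique_cut_correspondence_general [Fintype V] (G : SimpleGraph V) (d : ℕ)
    (u : V) (r : ℕ) (hr : 2 * d + 1 ≤ r) (F : Set (Sym2 V)) :
    ((∃ A B : Set V, IsDCut G d A B ∧ edgeCut G A B = F) ↔
      (∃ A B : Set (V ⊕ Fin r), IsDCut (attachPendantClique G u r) d A B ∧
        edgeCut (attachPendantClique G u r) A B = Sym2.map Sum.inl '' F)) ∧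
    ((∃ A B : Set V, IsMinimalDCut G d A B ∧ edgeCut G A B = F) ↔
      (∃ A B : Set (V ⊕ Fin r), IsMinimalDCut (attachPendantClique G u r) d A B ∧
        edgeCut (attachPendantClique G u r) A B = Sym2.map Sum.inl '' F)) ∧
    ((∃ A B : Set V, IsMaximalDCut G d A B ∧ edgeCut G A B = F) ↔
      (∃ A B : Set (V ⊕ Fin r), IsMaximalDCut (attachPendantClique G u r) d A B ∧
        edgeCut (attachPendantClique G u r) A B = Sym2.map Sum.inl '' F)) := by
  have hinj : Injective (Sym2.map (Sum.inl : V → V ⊕ Fin r)) :=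
    Sym2.map.injective Sum.inl_injective
  have hcuts := dCutEdgeCuts_attachPendantClique (G := G) (u := u) hr
  refine ⟨?_, ?_, ?_⟩
  · change F ∈ dCutEdgeCuts G d ↔ _ ∈ dCutEdgeCuts _ d
    rw [hcuts, (image_injective.2 hinj).mem_set_image]
  · rw [exists_isMinimalDCut_iff_minimal, exists_isMinimalDCut_iff_minimal, hcuts,
      minimal_mem_image_image_iff hinj]
  · rw [exists_isMaximalDCut_iff_maximal, exists_isMaximalDCut_iff_maximal, hcuts,
      maximal_mem_image_image_iff hinj]

/-- Attaching a pendant clique of `r ≥ 2d+1` vertices to a vertex `u` of `G` preserves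
the family of edge cuts of (minimal, maximal) `d`-cuts: `F ⊆ E(G)` is the edge cut of a
(minimal, maximal) `d`-cut of `G` iff its image is the edge cut of a (minimal, maximal)
`d`-cut of the resulting graph `H`. -/
theorem pendantClique_cut_correspondence [Fintype V] (G : SimpleGraph V) (d : ℕ)
    (hd : 1 ≤ d) (u : V) (r : ℕ) (hr : 2 * d + 1 ≤ r) (F : Set (Sym2 V))
    (hF : F ⊆ G.edgeSet) :
    ((∃ A B : Set V, IsDCut G d A B ∧ edgeCut G A B = F) ↔
      (∃ A B : Set (V ⊕ Fin r), IsDCut (attachPendantClique G u r) d A B ∧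
        edgeCut (attachPendantClique G u r) A B = Sym2.map Sum.inl '' F)) ∧
    ((∃ A B : Set V, IsMinimalDCut G d A B ∧ edgeCut G A B = F) ↔
      (∃ A B : Set (V ⊕ Fin r), IsMinimalDCut (attachPendantClique G u r) d A B ∧
        edgeCut (attachPendantClique G u r) A B = Sym2.map Sum.inl '' F)) ∧
    ((∃ A B : Set V, IsMaximalDCut G d A B ∧ edgeCut G A B = F) ↔
      (∃ A B : Set (V ⊕ Fin r), IsMaximalDCut (attachPendantClique G u r) d A B ∧
        edgeCut (attachPendantClique G u r) A B = Sym2.map Sum.inl '' F)) :=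
  pendantClique_cut_correspondence_general G d u r hr F
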